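/- arXiv:2411.10642 — 7 statements merged into one kernel-verified Lean document; each statement's English description precedes it below -/
import Mathlib

section
/- Let G be a group, let a, b ∈ G, and let x : ℕ → G be the twist sequence of (a, b). Then for every k ∈ ℕ one has x (2k) = (b*a)^k * a * (b*a)^{-k} and x (2k+1) = (b*a)^k * b * (b*a)^{-k}; in particular each term of the twist sequence is a conjugate of a or of b by a power of b*a. -/
/-- **Twist sequence formulas.** Given a group `G` and `a b : G`, and the twist
sequence `x` of `(a, b)` (i.e. `x 0 = a`, `x 1 = b`,
`x (k+2) = x (k+1) * x k * (x (k+1))⁻¹`), every even-indexed term `x (2k)` equals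
`(b*a)^k * a * (b*a)^{-k}` and every odd-indexed term `x (2k+1)` equals
`(b*a)^k * b * (b*a)^{-k}`; in particular each term of the twist sequence is a
conjugate of `a` or of `b` by a power of `b*a`. -/
theorem twist_sequence_formula {G : Type*} [Group G] (a b : G) (x : ℕ → G)
    (hx0 : x 0 = a) (hx1 : x 1 = b)
    (hrec : ∀ k : ℕ, x (k + 2) = x (k + 1) * x k * (x (k + 1))⁻¹) :
    ∀ k : ℕ,
      x (2 * k) = (b * a) ^ k * a * ((b * a) ^ k)⁻¹ ∧
      x (2 * k + 1) = (b * a) ^ k * b * ((b * a) ^ k)⁻¹ := by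
  intro k
  induction k with
  | zero => simp [hx0, hx1]
  | succ n ih =>
    obtain ⟨h1, h2⟩ := ih
    have e1 : x (2 * (n + 1)) = (b * a) ^ (n + 1) * a * ((b * a) ^ (n + 1))⁻¹ := by
      have : 2 * (n + 1) = 2 * n + 2 := by ring
      rw [this, hrec, h1, h2, pow_succ]
      group
    refine ⟨e1, ?_⟩
    have : 2 * (n + 1) + 1 = (2 * n + 1) + 2 := by ring
    rw [this, hrec (2 * n + 1)]
    have : 2 * n + 1 + 1 = 2 * (n + 1) := by ring
    rw [this, e1, h2, pow_succ]
    group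
end

section
/- Let G be a group and let a, b ∈ G satisfy a^2 = 1 and b^2 = 1. Let x : ℕ → G be the twist sequence of (a, b). If r, t ∈ ℕ satisfy (a*b)^r = 1 and r ∣ t, then x t = a and x (t+1) = b. (That is: if the order of a*b divides the number of crossings in a twist region whose two incoming strands are labeled by the involutions a and b, then the two outgoing strands are again labeled a and b, in the same order.) -/
/-- **Twist regions with involutive labels.** Let `a b : G` be involutions
(`a^2 = 1`, `b^2 = 1`) and let `x` be the twist sequence of `(a, b)`
(i.e. `x 0 = a`, `x 1 = b`, `x (k+2) = x (k+1) * x k * (x (k+1))⁻¹`).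
If `(a*b)^r = 1` and `r ∣ t`, then `x t = a` and `x (t+1) = b`: when the
order of `a*b` divides the number of crossings of a twist region whose incoming
strands are labeled by the involutions `a` and `b`, the outgoing strands are
again labeled `a` and `b`, in the same order. -/
theorem twist_sequence_period {G : Type*} [Group G] (a b : G)
    (ha : a ^ 2 = 1) (hb : b ^ 2 = 1) (x : ℕ → G)
    (hx0 : x 0 = a) (hx1 : x 1 = b)
    (hrec : ∀ k : ℕ, x (k + 2) = x (k + 1) * x k * (x (k + 1))⁻¹)
    (r t : ℕ) (hr : (a * b) ^ r = 1) (hrt : r ∣ t) :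
    x t = a ∧ x (t + 1) = b := by
  have ha' : a * a = 1 := by simpa [sq] using ha
  have hb' : b * b = 1 := by simpa [sq] using hb
  -- every term of the sequence is an involution
  have hinv : ∀ k, x k * x k = 1 := by
    have key : ∀ k, x k * x k = 1 ∧ x (k + 1) * x (k + 1) = 1 := by
      intro k
      induction k with
      | zero => exact ⟨by rw [hx0]; exact ha', by rw [hx1]; exact hb'⟩
      | succ n ih =>
        refine ⟨ih.2, ?_⟩
        rw [hrec n]
        calc x (n + 1) * x n * (x (n + 1))⁻¹ * (x (n + 1) * x n * (x (n + 1))⁻¹)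
            = x (n + 1) * (x n * x n) * (x (n + 1))⁻¹ := by group
          _ = 1 := by rw [ih.1]; group
    exact fun k => (key k).1
  -- the product of consecutive terms is constant
  have hconst : ∀ k, x (k + 1) * x k = b * a := by
    intro k
    induction k with
    | zero => rw [hx0, hx1]
    | succ n ih =>
      rw [hrec n]
      calc x (n + 1) * x n * (x (n + 1))⁻¹ * x (n + 1)
          = x (n + 1) * x n := by group
        _ = b * a := ih
  -- closed form
  have hclosed : ∀ k, x k = (b * a) ^ k * a := by
    intro k
    induction k with
    | zero => simpa using hx0
    | succ n ih =>
      have h1 : x (n + 1) * x n = b * a := hconst n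
      have h2 : x (n + 1) = (b * a) * (x n)⁻¹ := by
        rw [← h1]; group
      have h3 : (x n)⁻¹ = x n := by
        rw [inv_eq_iff_mul_eq_one]; exact hinv n
      rw [h2, h3, ih, pow_succ', ← mul_assoc]
  -- (b * a) ^ t = 1
  obtain ⟨q, rfl⟩ := hrt
  have hab : (a * b) ^ (r * q) = 1 := by
    rw [pow_mul, hr, one_pow]
  have hba : b * a = (a * b)⁻¹ := by
    rw [mul_inv_rev, inv_eq_iff_mul_eq_one.mpr ha', inv_eq_iff_mul_eq_one.mpr hb']
  have hc : (b * a) ^ (r * q) = 1 := by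
    rw [hba, inv_pow, hab, inv_one]
  constructor
  · rw [hclosed, hc, one_mul]
  · rw [hclosed, pow_succ, hc, one_mul, mul_assoc, ha', mul_one]
end

section
/- Fix an even integer m ≥ 2 and, for each even j with 2 ≤ j ≤ m−2, an odd integer δ_j ≥ 3. Then for every permutation π of {1, …, m} there exists a constrained fishnet datum (n, t) whose associated permutation σ(t) equals π. (Equivalently: the permutations of the strands induced by strong fishnet braids of width m whose even-column twist parameters are divisible by the prescribed odd integers δ_j exhaust the full symmetric group S_m.) -/
/-- The permutation of `{1, …, m}` (as `Fin m`, zero-indexed) which swaps the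
strands in (one-indexed) positions `j` and `j+1`, i.e. the zero-indexed
positions `j-1` and `j`; it is the identity when `j` is out of range. -/
def adjSwap (m : ℕ) (j : ℕ) : Equiv.Perm (Fin m) :=
  if h : 1 ≤ j ∧ j < m then Equiv.swap ⟨j - 1, by omega⟩ ⟨j, h.2⟩ else 1

lemma zpow_parity {M : Type*} [Group M] (g : M) (h : g * g = 1) (k : ℤ) :
    g ^ k = if Odd k then g else 1 := by
  have h2 : g ^ (2 : ℤ) = 1 := by
    rw [show (2:ℤ) = 1 + 1 by norm_num, zpow_add, zpow_one]; exact h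
  rcases Int.even_or_odd k with ⟨c, rfl⟩ | ⟨c, rfl⟩
  · rw [if_neg (by rw [Int.not_odd_iff_even]; exact ⟨c, rfl⟩),
      show c + c = 2 * c by ring, zpow_mul, h2, one_zpow]
  · rw [if_pos ⟨c, rfl⟩, zpow_add, zpow_one, zpow_mul, h2, one_zpow, one_mul]

lemma prod_single {M : Type*} [Monoid M] :
    ∀ (l : List ℕ) (f : ℕ → M) (j0 : ℕ), l.Nodup → j0 ∈ l →
      (∀ j ∈ l, j ≠ j0 → f j = 1) → (l.map f).prod = f j0 := by
  intro l
  induction l with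
  | nil => intro f j0 _ h; simp at h
  | cons a l ih =>
    intro f j0 hnd hmem hone
    rcases List.mem_cons.1 hmem with rfl | hm
    · have : ∀ x ∈ l.map f, x = 1 := by
        intro x hx
        obtain ⟨j, hj, rfl⟩ := List.mem_map.1 hx
        exact hone j (List.mem_cons_of_mem _ hj)
          (fun e => (List.nodup_cons.1 hnd).1 (e ▸ hj))
      simp [List.prod_eq_one this]
    · rw [List.map_cons, List.prod_cons,
        hone a List.mem_cons_self (fun e => (List.nodup_cons.1 hnd).1 (e ▸ hm)),
        one_mul]
      exact ih f j0 (List.nodup_cons.1 hnd).2 hm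
        (fun j hj => hone j (List.mem_cons_of_mem _ hj))

lemma adjSwap_sq (m j : ℕ) : adjSwap m j * adjSwap m j = 1 := by
  unfold adjSwap; split
  · exact Equiv.swap_mul_self _ _
  · exact one_mul 1

/-- The permutation `ρ_i` of `{1, …, m}` contributed by row `i` of a fishnet
braid with twist parameters `t`: the product over all columns `j` with
`1 ≤ j ≤ m-1` and `i + j` odd of `(swap j (j+1))^(t i j)`.  (The factors are
powers of disjoint adjacent transpositions, so they commute.) -/
def fishnetRowPerm (m : ℕ) (t : ℕ → ℕ → ℤ) (i : ℕ) : Equiv.Perm (Fin m) :=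
  ((List.range m).map fun j => if Odd (i + j) then adjSwap m j ^ (t i j) else 1).prod

/-- The permutation `σ(t)` of `{1, …, m}` associated to a fishnet braid of
height `n` and width `m` with twist parameters `t`: the product
`ρ_1 * ρ_2 * ⋯ * ρ_n` of the row permutations, in increasing order of the
row index.  This is the image of the fishnet braid `ζ_t` under the
homomorphism `B_m → S_m` sending `σ_i` to the transposition `(i, i+1)`. -/
def fishnetPerm (m : ℕ) (n : ℕ) (t : ℕ → ℕ → ℤ) : Equiv.Perm (Fin m) :=
  ((List.range n).map fun i => fishnetRowPerm m t (i + 1)).prod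

lemma fishnetRowPerm_eq_one (m : ℕ) (t : ℕ → ℕ → ℤ) (i : ℕ)
    (h : ∀ j, j < m → Odd (i + j) → Even (t i j)) :
    fishnetRowPerm m t i = 1 := by
  apply List.prod_eq_one
  intro x hx
  obtain ⟨j, hj, rfl⟩ := List.mem_map.1 hx
  rw [List.mem_range] at hj
  split
  · rw [zpow_parity _ (adjSwap_sq m j), if_neg (Int.not_odd_iff_even.2 (h j hj ‹_›))]
  · rfl

lemma fishnetRowPerm_eq_swap (m : ℕ) (t : ℕ → ℕ → ℤ) (i j0 : ℕ)
    (hj0 : j0 < m) (hodd : Odd (i + j0)) (ht : Odd (t i j0))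
    (h : ∀ j, j < m → j ≠ j0 → Odd (i + j) → Even (t i j)) :
    fishnetRowPerm m t i = adjSwap m j0 := by
  unfold fishnetRowPerm
  rw [prod_single (List.range m) _ j0 List.nodup_range (List.mem_range.2 hj0) ?_]
  · rw [if_pos hodd, zpow_parity _ (adjSwap_sq m j0), if_pos ht]
  · intro j hj hne
    rw [List.mem_range] at hj
    split
    · rw [zpow_parity _ (adjSwap_sq m j),
        if_neg (Int.not_odd_iff_even.2 (h j hj hne ‹_›))]
    · rfl

lemma fishnetRowPerm_congr (m : ℕ) (t t' : ℕ → ℕ → ℤ) (i i' : ℕ)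
    (hpar : ∀ j, Odd (i + j) ↔ Odd (i' + j))
    (ht : ∀ j, j < m → t i j = t' i' j) :
    fishnetRowPerm m t i = fishnetRowPerm m t' i' := by
  unfold fishnetRowPerm
  congr 1
  apply List.map_congr_left
  intro j hj
  rw [List.mem_range] at hj
  by_cases h : Odd (i + j)
  · rw [if_pos h, if_pos ((hpar j).1 h), ht j hj]
  · rw [if_neg h, if_neg (fun h' => h ((hpar j).2 h'))]

lemma fishnetPerm_add (m a b : ℕ) (t : ℕ → ℕ → ℤ) :
    fishnetPerm m (a + b) t =
      fishnetPerm m a t *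
        ((List.range b).map fun i => fishnetRowPerm m t (a + i + 1)).prod := by
  unfold fishnetPerm
  rw [List.range_add, List.map_append, List.prod_append, List.map_map]
  rfl

lemma fishnetPerm_congr (m n : ℕ) (t t' : ℕ → ℕ → ℤ)
    (h : ∀ i, 1 ≤ i → i ≤ n → ∀ j, j < m → t i j = t' i j) :
    fishnetPerm m n t = fishnetPerm m n t' := by
  unfold fishnetPerm
  congr 1
  apply List.map_congr_left
  intro i hi
  rw [List.mem_range] at hi
  exact fishnetRowPerm_congr m t t' (i+1) (i+1) (fun j => Iff.rfl)
    (h (i+1) (by omega) (by omega))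

/-- A *constrained fishnet datum* for width `m` and column constraints `δ`:
an odd positive integer `n` together with twist parameters `t i j`
(relevant for `1 ≤ i ≤ n`, `1 ≤ j ≤ m-1`, `i + j` odd) such that
`|t i j| ≥ 3` always (a strong fishnet) and `δ j ∣ t i j` for even `j`. -/
def IsConstrainedFishnetDatum (m : ℕ) (δ : ℕ → ℕ) (n : ℕ) (t : ℕ → ℕ → ℤ) : Prop :=
  Odd n ∧ 1 ≤ n ∧
    (∀ i j : ℕ, 1 ≤ i → i ≤ n → 1 ≤ j → j ≤ m - 1 → Odd (i + j) → 3 ≤ |t i j|) ∧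
    (∀ i j : ℕ, 1 ≤ i → i ≤ n → 1 ≤ j → j ≤ m - 1 → Odd (i + j) → Even j →
      (δ j : ℤ) ∣ t i j)

/-- **Strong fishnet braids realize all permutations.** Fix an even `m ≥ 2`
and, for each even `j` with `2 ≤ j ≤ m-2`, an odd integer `δ j ≥ 3`.  Then
every permutation `π` of `{1, …, m}` is the associated permutation `σ(t)` of
some constrained fishnet datum `(n, t)`. -/
theorem fishnetPerm_surjective (m : ℕ) (hm : Even m) (hm2 : 2 ≤ m)
    (δ : ℕ → ℕ)
    (hδodd : ∀ j : ℕ, 2 ≤ j → j ≤ m - 2 → Even j → Odd (δ j))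
    (hδ3 : ∀ j : ℕ, 2 ≤ j → j ≤ m - 2 → Even j → 3 ≤ δ j)
    (π : Equiv.Perm (Fin m)) :
    ∃ (n : ℕ) (t : ℕ → ℕ → ℤ),
      IsConstrainedFishnetDatum m δ n t ∧ fishnetPerm m n t = π := by
  obtain ⟨m', rfl⟩ : ∃ m', m = m' + 1 := ⟨m - 1, by omega⟩
  have hmpar : (m' + 1) % 2 = 0 := Nat.even_iff.1 hm
  set evT : ℕ → ℤ := fun j => if Even j then 2 * (δ j : ℤ) else 4 with hevT
  set odT : ℕ → ℤ := fun j => if Even j then (δ j : ℤ) else 3 with hodT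
  have hjrange : ∀ j : ℕ, 1 ≤ j → j ≤ m' + 1 - 1 → Even j → 2 ≤ j ∧ j ≤ m' + 1 - 2 := by
    intro j h1 h2 hE
    have := Nat.even_iff.1 hE
    omega
  have hδ3' : ∀ j : ℕ, 1 ≤ j → j ≤ m' + 1 - 1 → Even j → 3 ≤ δ j := fun j h1 h2 hE =>
    hδ3 j (hjrange j h1 h2 hE).1 (hjrange j h1 h2 hE).2 hE
  have hδodd' : ∀ j : ℕ, 1 ≤ j → j ≤ m' + 1 - 1 → Even j → Odd (δ j) := fun j h1 h2 hE =>
    hδodd j (hjrange j h1 h2 hE).1 (hjrange j h1 h2 hE).2 hE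
  have hevEven : ∀ j, Even (evT j) := by
    intro j; rw [hevT]; dsimp only; split
    · exact ⟨(δ j : ℤ), by ring⟩
    · exact ⟨2, by norm_num⟩
  have hev3 : ∀ j : ℕ, 1 ≤ j → j ≤ m' + 1 - 1 → 3 ≤ |evT j| := by
    intro j h1 h2; rw [hevT]; dsimp only; split
    · have := hδ3' j h1 h2 ‹_›
      rw [abs_of_nonneg (by positivity)]
      omega
    · norm_num
  have hevDvd : ∀ j : ℕ, Even j → (δ j : ℤ) ∣ evT j := by
    intro j hE; rw [hevT]; dsimp only; rw [if_pos hE]; exact ⟨2, by ring⟩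
  have hodOdd : ∀ j : ℕ, 1 ≤ j → j ≤ m' + 1 - 1 → Odd (odT j) := by
    intro j h1 h2; rw [hodT]; dsimp only; split
    · exact (hδodd' j h1 h2 ‹_›).natCast
    · exact ⟨1, by norm_num⟩
  have hod3 : ∀ j : ℕ, 1 ≤ j → j ≤ m' + 1 - 1 → 3 ≤ |odT j| := by
    intro j h1 h2; rw [hodT]; dsimp only; split
    · have := hδ3' j h1 h2 ‹_›
      rw [abs_of_nonneg (by positivity)]
      omega
    · norm_num
  have hodDvd : ∀ j : ℕ, Even j → (δ j : ℤ) ∣ odT j := by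
    intro j hE; rw [hodT]; dsimp only; rw [if_pos hE]
  have hπ : π ∈ Submonoid.closure
      (Set.range fun i : Fin m' ↦ Equiv.swap i.castSucc i.succ) := by
    rw [Equiv.Perm.mclosure_swap_castSucc_succ]; trivial
  induction hπ using Submonoid.closure_induction with
  | one =>
    refine ⟨1, fun _ j => evT j, ⟨⟨0, rfl⟩, le_refl 1, ?_, ?_⟩, ?_⟩
    · intro i j _ _ h1 h2 _; exact hev3 j h1 h2
    · intro i j _ _ _ _ _ hE; exact hevDvd j hE
    · have : fishnetPerm (m' + 1) 1 (fun _ j => evT j) =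
          fishnetRowPerm (m' + 1) (fun _ j => evT j) 1 := by
        rw [fishnetPerm, show List.range 1 = [0] from rfl, List.map_singleton,
          List.prod_singleton]
      rw [this, fishnetRowPerm_eq_one]
      intro j _ _; exact hevEven j
  | mem x hx =>
    obtain ⟨i, rfl⟩ := hx
    dsimp only
    set j0 : ℕ := (i : ℕ) + 1 with hj0def
    have hj0m : j0 ≤ m' := by have := i.isLt; omega
    set r : ℕ := if Even j0 then 1 else 2 with hrdef
    have hrodd : Odd (r + j0) := by
      rw [Nat.odd_iff, hrdef]
      rcases Nat.even_or_odd j0 with hE | hO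
      · rw [if_pos hE]; have := Nat.even_iff.1 hE; omega
      · rw [if_neg (Nat.not_even_iff_odd.2 hO)]; have := Nat.odd_iff.1 hO; omega
    have hr12 : 1 ≤ r ∧ r ≤ 2 := by rw [hrdef]; split <;> omega
    set t : ℕ → ℕ → ℤ := fun i j => if i = r ∧ j = j0 then odT j else evT j with htdef
    have hadj : adjSwap (m' + 1) j0 = Equiv.swap i.castSucc i.succ := by
      rw [adjSwap, dif_pos ⟨by omega, by omega⟩]
      have e1 : (⟨j0 - 1, by omega⟩ : Fin (m' + 1)) = i.castSucc :=
        Fin.ext (by simp [hj0def])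
      have e2 : (⟨j0, by omega⟩ : Fin (m' + 1)) = i.succ := Fin.ext rfl
      rw [e1, e2]
    refine ⟨3, t, ⟨⟨1, rfl⟩, by norm_num, ?_, ?_⟩, ?_⟩
    · intro a j _ _ h1 h2 _
      rw [htdef]; dsimp only; split
      · exact hod3 j h1 h2
      · exact hev3 j h1 h2
    · intro a j _ _ _ _ _ hE
      rw [htdef]; dsimp only; split
      · exact hodDvd j hE
      · exact hevDvd j hE
    · have hrowr : fishnetRowPerm (m' + 1) t r = adjSwap (m' + 1) j0 := by
        apply fishnetRowPerm_eq_swap _ _ _ _ (by omega) hrodd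
        · rw [htdef]; dsimp only; rw [if_pos ⟨rfl, rfl⟩]
          exact hodOdd j0 (by omega) (by omega)
        · intro j _ hne _
          rw [htdef]; dsimp only
          rw [if_neg (fun h => hne h.2)]
          exact hevEven j
      have hrowo : ∀ a, a ≠ r → fishnetRowPerm (m' + 1) t a = 1 := by
        intro a ha
        apply fishnetRowPerm_eq_one
        intro j _ _
        rw [htdef]; dsimp only
        rw [if_neg (fun h => ha h.1)]
        exact hevEven j
      have h3 : fishnetPerm (m' + 1) 3 t =
          fishnetRowPerm (m' + 1) t 1 * fishnetRowPerm (m' + 1) t 2 *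
            fishnetRowPerm (m' + 1) t 3 := by
        rw [fishnetPerm, show List.range 3 = [0, 1, 2] from rfl]
        simp [mul_assoc]
      rw [h3, ← hadj]
      rcases Nat.even_or_odd j0 with hE | hO
      · have hr1 : r = 1 := by rw [hrdef, if_pos hE]
        have hrr := hrowr
        rw [hr1] at hrr
        rw [hrowo 2 (by omega), hrowo 3 (by omega), mul_one, mul_one, hrr]
      · have hr2 : r = 2 := by rw [hrdef, if_neg (Nat.not_even_iff_odd.2 hO)]
        have hrr := hrowr
        rw [hr2] at hrr
        rw [hrowo 1 (by omega), hrowo 3 (by omega), one_mul, mul_one, hrr]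
  | mul x y hx hy ihx ihy =>
    obtain ⟨n1, t1, ⟨hodd1, hn1, h31, hd1⟩, he1⟩ := ihx
    obtain ⟨n2, t2, ⟨hodd2, hn2, h32, hd2⟩, he2⟩ := ihy
    have hn1p : n1 % 2 = 1 := Nat.odd_iff.1 hodd1
    have hn2p : n2 % 2 = 1 := Nat.odd_iff.1 hodd2
    set t : ℕ → ℕ → ℤ := fun i j =>
      if i ≤ n1 then t1 i j else if i = n1 + 1 then evT j else t2 (i - (n1 + 1)) j
      with htdef
    refine ⟨n1 + 1 + n2, t, ⟨Nat.odd_iff.2 (by omega), by omega, ?_, ?_⟩, ?_⟩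
    · intro a j ha1 ha2 h1 h2 hpar
      rw [htdef]; dsimp only
      split
      · exact h31 a j ha1 ‹_› h1 h2 hpar
      · split
        · exact hev3 j h1 h2
        · refine h32 (a - (n1+1)) j (by omega) (by omega) h1 h2 ?_
          rw [Nat.odd_iff] at hpar ⊢
          omega
    · intro a j ha1 ha2 h1 h2 hpar hE
      rw [htdef]; dsimp only
      split
      · exact hd1 a j ha1 ‹_› h1 h2 hpar hE
      · split
        · exact hevDvd j hE
        · refine hd2 (a - (n1+1)) j (by omega) (by omega) h1 h2 ?_ hE
          rw [Nat.odd_iff] at hpar ⊢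
          omega
    · have key1 : fishnetPerm (m' + 1) n1 t = x := by
        rw [← he1]
        apply fishnetPerm_congr
        intro a ha1 ha2 j _
        rw [htdef]; dsimp only; rw [if_pos ha2]
      have key2 : ((List.range n2).map fun i =>
          fishnetRowPerm (m' + 1) t (n1 + 1 + i + 1)).prod = y := by
        rw [← he2, fishnetPerm]
        congr 1
        apply List.map_congr_left
        intro a ha
        apply fishnetRowPerm_congr
        · intro j
          rw [Nat.odd_iff, Nat.odd_iff]
          omega
        · intro j _
          rw [htdef]; dsimp only
          rw [if_neg (by omega), if_neg (by omega),
            show n1 + 1 + a + 1 - (n1 + 1) = a + 1 by omega]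
      have keymid : fishnetRowPerm (m' + 1) t (n1 + 1) = 1 := by
        apply fishnetRowPerm_eq_one
        intro j _ _
        rw [htdef]; dsimp only
        rw [if_neg (by omega), if_pos rfl]
        exact hevEven j
      rw [fishnetPerm_add, fishnetPerm_add, key2]
      have hrange1 : ((List.range 1).map fun i =>
          fishnetRowPerm (m' + 1) t (n1 + i + 1)).prod =
          fishnetRowPerm (m' + 1) t (n1 + 1) := by
        rw [show List.range 1 = [0] from rfl, List.map_singleton, List.prod_singleton]
      rw [hrange1, keymid, mul_one, key1]
end

section
/- Let n ≥ 1 and let G'_n be the group with presentation ⟨a_1, …, a_n ∣ a_i^2 = 1 for all i, and (a_i a_j)^3 = 1 for all i ≠ j⟩. Then G'_n cannot be generated by fewer than n elements; since it is generated by the images of a_1, …, a_n, the rank of G'_n (the minimal cardinality of a generating set) is exactly n. -/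
def chi (e : ZMod 2) : ZMod 3 := if e = 0 then 1 else -1

lemma chi_add : ∀ e d : ZMod 2, chi (e + d) = chi e * chi d := by decide
lemma chi_zero : chi 0 = 1 := rfl
lemma chi_one : chi 1 = -1 := rfl
lemma chi_sq : ∀ e : ZMod 2, chi e * chi e = 1 := by decide
lemma zmod2_add_self : ∀ e : ZMod 2, e + e = 0 := by decide
lemma zmod2_cases : ∀ e : ZMod 2, e = 0 ∨ e = 1 := by decide

@[ext] structure Dm (n : ℕ) where
  v : Fin n → ZMod 3
  s : ZMod 2

namespace Dm
variable {n : ℕ}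

instance : Mul (Dm n) := ⟨fun g h => ⟨g.v + chi g.s • h.v, g.s + h.s⟩⟩
instance : One (Dm n) := ⟨⟨0, 0⟩⟩
instance : Inv (Dm n) := ⟨fun g => ⟨-(chi g.s • g.v), g.s⟩⟩

@[simp] lemma mul_v (g h : Dm n) : (g * h).v = g.v + chi g.s • h.v := rfl
@[simp] lemma mul_s (g h : Dm n) : (g * h).s = g.s + h.s := rfl
@[simp] lemma one_v : (1 : Dm n).v = 0 := rfl
@[simp] lemma one_s : (1 : Dm n).s = 0 := rfl
@[simp] lemma inv_v (g : Dm n) : (g⁻¹).v = -(chi g.s • g.v) := rfl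
@[simp] lemma inv_s (g : Dm n) : (g⁻¹).s = g.s := rfl

instance : Group (Dm n) where
  mul_assoc g h k := by
    ext <;> simp [chi_add, add_assoc, smul_add, smul_smul, mul_comm]
  one_mul g := by ext <;> simp [chi_zero]
  mul_one g := by ext <;> simp
  inv_mul_cancel g := by
    ext <;> simp [smul_smul, chi_sq, zmod2_add_self]
end Dm

/-- The relators `a_i^2` (for all `i`) and `(a_i a_j)^3` (for all `i ≠ j`)
on `n` generators: the Coxeter presentation whose diagram is the complete
graph on `n` vertices with all edges labeled `3`. -/
def cliqueRelators (n : ℕ) : Set (FreeGroup (Fin n)) :=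
  (Set.range fun i : Fin n => FreeGroup.of i ^ 2) ∪
    {w | ∃ i j : Fin n, i ≠ j ∧ w = (FreeGroup.of i * FreeGroup.of j) ^ 3}

/-- The generators of the target group. -/
def gen (n : ℕ) (i : Fin n) : Dm n := ⟨Pi.single i 1, 1⟩

lemma gen_relators (n : ℕ) : ∀ r ∈ cliqueRelators n, FreeGroup.lift (gen n) r = 1 := by
  rintro r (⟨i, rfl⟩ | ⟨i, j, _hij, rfl⟩)
  · simp only [map_pow, FreeGroup.lift_apply_of]
    ext <;> simp [gen, pow_two, chi_one, zmod2_add_self]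
  · simp only [map_pow, map_mul, FreeGroup.lift_apply_of]
    have h1 : gen n i * gen n j = ⟨Pi.single i 1 - Pi.single j 1, 0⟩ := by
      ext <;> simp [gen, chi_one, zmod2_add_self, sub_eq_add_neg]
    rw [h1, pow_succ, pow_succ, pow_one]
    have h3 : ∀ x : ZMod 3, x + x + x = 0 := by decide
    ext t
    · simp only [Dm.mul_v, Dm.mul_s, add_zero, chi_zero, one_smul, Pi.add_apply]
      exact h3 _
    · simp

/-- The evaluation homomorphism. -/
def fhom (n : ℕ) : PresentedGroup (cliqueRelators n) →* Dm n :=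
  PresentedGroup.toGroup (gen_relators n)

@[simp] lemma fhom_of (n : ℕ) (i : Fin n) : fhom n (PresentedGroup.of i) = gen n i :=
  PresentedGroup.toGroup.of (gen_relators n)

/-- **Rank of the complete-graph Coxeter group.** For `n ≥ 1`, the group
`G'_n = ⟨a_1, …, a_n ∣ a_i^2 = 1, (a_i a_j)^3 = 1 for i ≠ j⟩` cannot be
generated by fewer than `n` elements, and (being generated by the images of
`a_1, …, a_n`) it is generated by some set of `n` elements: its rank — the
least cardinality of a finite generating set — is exactly `n`. -/
theorem rank_cliqueCoxeterGroup (n : ℕ) (hn : 1 ≤ n) :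
    IsLeast {k : ℕ | ∃ S : Finset (PresentedGroup (cliqueRelators n)),
      S.card = k ∧
        Subgroup.closure (S : Set (PresentedGroup (cliqueRelators n))) = ⊤} n := by
  constructor
  · -- upper bound: the images of the generators form a generating set of size n
    classical
    refine ⟨Finset.univ.image PresentedGroup.of, ?_, ?_⟩
    · rw [Finset.card_image_of_injective _ ?_, Finset.card_univ, Fintype.card_fin]
      intro i j hij
      have : fhom n (PresentedGroup.of i) = fhom n (PresentedGroup.of j) := by rw [hij]
      simp only [fhom_of, gen, Dm.mk.injEq] at this
      by_contra hne
      have := congrFun this.1 i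
      simp [Pi.single_apply, hne] at this
    · rw [Finset.coe_image, Finset.coe_univ, Set.image_univ]
      exact PresentedGroup.closure_range_of _
  · -- lower bound
    rintro k ⟨S, rfl, hS⟩
    classical
    set f := fhom n
    set T : Finset (Dm n) := S.image f with hTdef
    -- every generator image lies in the closure of T
    have hgen : ∀ i : Fin n, gen n i ∈ Subgroup.closure (T : Set (Dm n)) := by
      intro i
      have : gen n i ∈ (Subgroup.closure (S : Set (PresentedGroup (cliqueRelators n)))).map f := by
        rw [hS]
        exact ⟨PresentedGroup.of i, trivial, fhom_of n i⟩
      rwa [MonoidHom.map_closure, ← Finset.coe_image] at this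
    set i0 : Fin n := ⟨0, hn⟩ with hi0
    -- there is an element of T with sign 1
    have hex : ∃ g ∈ T, g.s = 1 := by
      by_contra hno
      push_neg at hno
      have hno' : ∀ g ∈ T, g.s = 0 := by
        intro g hg
        rcases zmod2_cases g.s with h | h
        · exact h
        · exact absurd h (hno g hg)
      set K0 : Subgroup (Dm n) :=
        { carrier := {g | g.s = 0}
          one_mem' := rfl
          mul_mem' := by
            intro a b ha hb
            show a.s + b.s = 0
            rw [Set.mem_setOf_eq.mp ha, Set.mem_setOf_eq.mp hb, add_zero]
          inv_mem' := by
            intro a ha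
            exact ha } with hK0
      have hle : Subgroup.closure (T : Set (Dm n)) ≤ K0 :=
        (Subgroup.closure_le K0).mpr (fun g hg => hno' g (by exact_mod_cast hg))
      have := hle (hgen i0)
      exact one_ne_zero (this : (gen n i0).s = 0)
    obtain ⟨g0, hg0T, hg0s⟩ := hex
    -- the span of the "reduced" images of T \ {g0}
    set wfun : Dm n → (Fin n → ZMod 3) := fun g => if g.s = 0 then g.v else g.v - g0.v
      with hwfun
    set U : Finset (Fin n → ZMod 3) := (T.erase g0).image wfun with hU
    set W : Submodule (ZMod 3) (Fin n → ZMod 3) := Submodule.span (ZMod 3) (U : Set _) with hW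
    -- the subgroup K determined by W
    set K : Subgroup (Dm n) :=
      { carrier := {g | wfun g ∈ W}
        one_mem' := by
          show (if (0 : ZMod 2) = 0 then (0 : Fin n → ZMod 3) else 0 - g0.v) ∈ W
          rw [if_pos rfl]
          exact W.zero_mem
        mul_mem' := by
          intro a b ha hb
          have ha' : (if a.s = 0 then a.v else a.v - g0.v) ∈ W := ha
          have hb' : (if b.s = 0 then b.v else b.v - g0.v) ∈ W := hb
          show (if a.s + b.s = 0 then a.v + chi a.s • b.v
              else a.v + chi a.s • b.v - g0.v) ∈ W
          rcases zmod2_cases a.s with h1 | h1 <;> rcases zmod2_cases b.s with h2 | h2 <;>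
            rw [h1] at ha' ⊢ <;> rw [h2] at hb' ⊢
          · rw [if_pos rfl] at ha' hb'
            rw [show (0 : ZMod 2) + 0 = 0 by decide, if_pos rfl, chi_zero, one_smul]
            exact W.add_mem ha' hb'
          · rw [if_pos rfl] at ha'
            rw [if_neg one_ne_zero] at hb'
            rw [show (0 : ZMod 2) + 1 = 1 by decide, if_neg one_ne_zero, chi_zero, one_smul]
            have h : a.v + b.v - g0.v = a.v + (b.v - g0.v) := by abel
            rw [h]
            exact W.add_mem ha' hb'
          · rw [if_neg one_ne_zero] at ha'
            rw [if_pos rfl] at hb'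
            rw [show (1 : ZMod 2) + 0 = 1 by decide, if_neg one_ne_zero, chi_one, neg_one_smul]
            have h : a.v + -b.v - g0.v = (a.v - g0.v) + -b.v := by abel
            rw [h]
            exact W.add_mem ha' (W.neg_mem hb')
          · rw [if_neg one_ne_zero] at ha' hb'
            rw [show (1 : ZMod 2) + 1 = 0 by decide, if_pos rfl, chi_one, neg_one_smul]
            have h : a.v + -b.v = (a.v - g0.v) - (b.v - g0.v) := by abel
            rw [h]
            exact W.sub_mem ha' hb'
        inv_mem' := by
          intro a ha
          have ha' : (if a.s = 0 then a.v else a.v - g0.v) ∈ W := ha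
          show (if a.s = 0 then -(chi a.s • a.v) else -(chi a.s • a.v) - g0.v) ∈ W
          rcases zmod2_cases a.s with h1 | h1 <;> rw [h1] at ha' ⊢
          · rw [if_pos rfl] at ha' ⊢
            rw [chi_zero, one_smul]
            exact W.neg_mem ha'
          · rw [if_neg one_ne_zero] at ha' ⊢
            rw [chi_one, neg_one_smul, neg_neg]
            exact ha' } with hK
    -- T is contained in K, hence so is its closure
    have hTK : Subgroup.closure (T : Set (Dm n)) ≤ K := by
      apply (Subgroup.closure_le K).mpr
      intro g hg
      have hg' : g ∈ T := by exact_mod_cast hg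
      by_cases hgg0 : g = g0
      · subst hgg0
        show wfun g ∈ W
        rw [hwfun]
        simp only [hg0s, one_ne_zero, if_false, sub_self]
        exact W.zero_mem
      · show wfun g ∈ W
        exact Submodule.subset_span (Finset.mem_coe.mpr
          (Finset.mem_image_of_mem wfun (Finset.mem_erase.mpr ⟨hgg0, hg'⟩)))
    -- each e_i - e_{i0} lies in W
    have hdiff : ∀ i : Fin n, (Pi.single i 1 - Pi.single i0 1 : Fin n → ZMod 3) ∈ W := by
      intro i
      have hmem : gen n i * gen n i0 ∈ Subgroup.closure (T : Set (Dm n)) :=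
        Subgroup.mul_mem _ (hgen i) (hgen i0)
      have := hTK hmem
      have hthis : wfun (gen n i * gen n i0) ∈ W := this
      have hs : (gen n i * gen n i0).s = 0 := by
        show (1 : ZMod 2) + 1 = 0
        decide
      have hv : (gen n i * gen n i0).v = Pi.single i 1 - Pi.single i0 1 := by
        show (Pi.single i 1 : Fin n → ZMod 3) + chi 1 • (Pi.single i0 1 : Fin n → ZMod 3)
            = Pi.single i 1 - Pi.single i0 1
        rw [chi_one, neg_one_smul, sub_eq_add_neg]
      rw [hwfun] at hthis
      simp only [hs, hv, if_pos, reduceIte] at hthis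
      exact hthis
    -- linear independence of the differences e_i - e_{i0}
    have hli : LinearIndependent (ZMod 3) (fun i : {i : Fin n // i ≠ i0} =>
        (Pi.single (i : Fin n) 1 - Pi.single i0 1 : Fin n → ZMod 3)) := by
      apply LinearIndependent.of_comp
        (LinearMap.funLeft (ZMod 3) (ZMod 3) (Subtype.val : {i : Fin n // i ≠ i0} → Fin n))
      have heq : (⇑(LinearMap.funLeft (ZMod 3) (ZMod 3)
            (Subtype.val : {i : Fin n // i ≠ i0} → Fin n)) ∘ fun i : {i : Fin n // i ≠ i0} =>
            (Pi.single (i : Fin n) 1 - Pi.single i0 1 : Fin n → ZMod 3))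
          = fun i : {i : Fin n // i ≠ i0} => Pi.single i (1 : ZMod 3) := by
        funext i j
        simp only [Function.comp_apply, LinearMap.funLeft_apply, Pi.sub_apply,
          Pi.single_apply, Subtype.ext_iff]
        rw [if_neg j.2, sub_zero]
      rw [heq]
      have hb := (Pi.basisFun (ZMod 3) {i : Fin n // i ≠ i0}).linearIndependent
      have heq2 : ⇑(Pi.basisFun (ZMod 3) {i : Fin n // i ≠ i0})
          = fun i : {i : Fin n // i ≠ i0} => Pi.single i (1 : ZMod 3) :=
        funext fun i => Pi.basisFun_apply _ _ i
      rwa [heq2] at hb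
    -- the family inside W
    have hliW : LinearIndependent (ZMod 3) (fun i : {i : Fin n // i ≠ i0} =>
        (⟨Pi.single (i : Fin n) 1 - Pi.single i0 1, hdiff i⟩ : W)) :=
      LinearIndependent.of_comp W.subtype hli
    have hcard1 : Fintype.card {i : Fin n // i ≠ i0} ≤ Module.finrank (ZMod 3) W :=
      hliW.fintype_card_le_finrank
    have hcard2 : Fintype.card {i : Fin n // i ≠ i0} = n - 1 := by
      rw [Fintype.card_subtype_compl, Fintype.card_subtype_eq, Fintype.card_fin]
    have hcard3 : Module.finrank (ZMod 3) W ≤ U.card := finrank_span_finset_le_card U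
    have hcard4 : U.card ≤ (T.erase g0).card := Finset.card_image_le
    have hcard5 : (T.erase g0).card = T.card - 1 := Finset.card_erase_of_mem hg0T
    have hcard6 : T.card ≤ S.card := Finset.card_image_le
    have hSpos : 1 ≤ S.card := by
      rcases Finset.mem_image.mp hg0T with ⟨x, hx, _⟩
      exact Finset.card_pos.mpr ⟨x, hx⟩
    have hTpos : 1 ≤ T.card := Finset.card_pos.mpr ⟨g0, hg0T⟩
    omega
end

section
/- Let n ≥ 1 and let P_n be the group with presentation ⟨a_1, …, a_n ∣ a_i^2 = 1 for all i, and (a_i a_{i+1})^3 = 1 for 1 ≤ i ≤ n−1⟩. Then P_n cannot be generated by fewer than n elements; since it is generated by the images of a_1, …, a_n, the rank of P_n (the minimal cardinality of a generating set) is exactly n. -/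
/-- The relators `a_i^2` (for all `i`) and `(a_i a_{i+1})^3` (for consecutive
generators) on `n` generators: the Coxeter presentation whose diagram is a
path on `n` vertices with all edges labeled `3` and all non-adjacent bonds
infinite. -/
def pathThreeRelators (n : ℕ) : Set (FreeGroup (Fin n)) :=
  (Set.range fun i : Fin n => FreeGroup.of i ^ 2) ∪
    {w | ∃ i j : Fin n, (i : ℕ) + 1 = (j : ℕ) ∧
      w = (FreeGroup.of i * FreeGroup.of j) ^ 3}

/-- The generalized dihedral group `(ℤ/3)^n ⋊ ℤ/2`, where `ℤ/2` acts by
inversion. -/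
structure GD (n : ℕ) where
  v : Fin n → ZMod 3
  s : ZMod 2

namespace GD

variable {n : ℕ}

lemma zmod2_cases (a : ZMod 2) : a = 0 ∨ a = 1 := by revert a; decide

@[ext] lemma ext' {p q : GD n} (h1 : p.v = q.v) (h2 : p.s = q.s) : p = q := by
  cases p; cases q; simp_all

instance : Mul (GD n) := ⟨fun p q => ⟨p.v + (if p.s = 0 then q.v else -q.v), p.s + q.s⟩⟩
instance : One (GD n) := ⟨⟨0, 0⟩⟩
instance : Inv (GD n) := ⟨fun p => ⟨if p.s = 0 then -p.v else p.v, p.s⟩⟩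

@[simp] lemma mul_v (p q : GD n) : (p * q).v = p.v + (if p.s = 0 then q.v else -q.v) := rfl
@[simp] lemma mul_s (p q : GD n) : (p * q).s = p.s + q.s := rfl
@[simp] lemma one_v : (1 : GD n).v = 0 := rfl
@[simp] lemma one_s : (1 : GD n).s = 0 := rfl
@[simp] lemma inv_v (p : GD n) : (p⁻¹).v = if p.s = 0 then -p.v else p.v := rfl
@[simp] lemma inv_s (p : GD n) : (p⁻¹).s = p.s := rfl

instance : Group (GD n) where
  mul_assoc p q r := by
    rcases zmod2_cases p.s with h1 | h1 <;> rcases zmod2_cases q.s with h2 | h2 <;>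
      apply ext' <;>
      simp [h1, h2, neg_add] <;> abel
  one_mul p := by apply ext' <;> simp
  mul_one p := by apply ext' <;> simp
  inv_mul_cancel p := by
    rcases zmod2_cases p.s with h1 | h1 <;> apply ext' <;> simp [h1] <;> decide

/-- Any "reflection" (element with sign `1`) squares to the identity. -/
lemma sq_eq_one {p : GD n} (hp : p.s = 1) : p * p = 1 := by
  apply ext' <;> simp [hp] <;> decide

/-- Any "translation" (element with sign `0`) cubes to the identity. -/
lemma cube_eq_one {p : GD n} (hp : p.s = 0) : p ^ 3 = 1 := by
  have h3 : ∀ a : ZMod 3, a + a + a = 0 := by decide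
  rw [pow_succ, sq]
  apply ext'
  · simp [hp]
    funext x
    simpa using h3 (p.v x)
  · simp [hp]

end GD

section Main

variable {n : ℕ}

/-- The images of the generators in `GD n`: the `i`-th generator maps to the
reflection with translation part the `i`-th standard basis vector. -/
def genImg (n : ℕ) (i : Fin n) : GD n := ⟨Pi.single i 1, 1⟩

lemma relators_mapped (n : ℕ) :
    ∀ r ∈ pathThreeRelators n, FreeGroup.lift (genImg n) r = 1 := by
  rintro r (⟨i, rfl⟩ | ⟨i, j, -, rfl⟩)
  · rw [map_pow, FreeGroup.lift_apply_of, sq]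
    exact GD.sq_eq_one rfl
  · rw [map_pow, map_mul, FreeGroup.lift_apply_of, FreeGroup.lift_apply_of]
    apply GD.cube_eq_one
    simp [genImg]
    decide

/-- The key homomorphism from the presented group to `GD n`. -/
noncomputable def phi (n : ℕ) : PresentedGroup (pathThreeRelators n) →* GD n :=
  PresentedGroup.toGroup (relators_mapped n)

lemma phi_of (i : Fin n) : phi n (PresentedGroup.of i) = genImg n i :=
  PresentedGroup.toGroup.of _

lemma of_injective : Function.Injective
    (PresentedGroup.of : Fin n → PresentedGroup (pathThreeRelators n)) := by
  intro i j h
  by_contra hij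
  have := congrArg (phi n) h
  rw [phi_of, phi_of] at this
  have hv := congrArg GD.v this
  have := congrFun hv i
  rw [show (genImg n i).v = Pi.single i 1 from rfl,
    show (genImg n j).v = Pi.single j 1 from rfl] at this
  rw [Pi.single_eq_same, Pi.single_eq_of_ne hij] at this
  exact one_ne_zero this

/-- **Rank of the path Coxeter group with all labels 3.** For `n ≥ 1`, the
group `P_n = ⟨a_1, …, a_n ∣ a_i^2 = 1, (a_i a_{i+1})^3 = 1⟩` cannot be
generated by fewer than `n` elements, and (being generated by the images of
`a_1, …, a_n`) it is generated by some set of `n` elements: its rank — the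
least cardinality of a finite generating set — is exactly `n`. -/
theorem rank_pathCoxeterGroup (n : ℕ) (hn : 1 ≤ n) :
    IsLeast {k : ℕ | ∃ S : Finset (PresentedGroup (pathThreeRelators n)),
      S.card = k ∧
        Subgroup.closure (S : Set (PresentedGroup (pathThreeRelators n))) = ⊤} n := by
  classical
  constructor
  · -- the images of the `n` generators generate
    refine ⟨Finset.image PresentedGroup.of Finset.univ, ?_, ?_⟩
    · rw [Finset.card_image_of_injective _ of_injective, Finset.card_univ, Fintype.card_fin]
    · rw [Finset.coe_image, Finset.coe_univ, Set.image_univ]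
      exact PresentedGroup.closure_range_of _
  · -- any generating set has at least `n` elements
    rintro k ⟨S, rfl, hclos⟩
    haveI : Fact (Nat.Prime 3) := ⟨by norm_num⟩
    set S' : Finset (Fin n → ZMod 3) := S.image (fun g => (phi n g).v) with hS'
    set U : Submodule (ZMod 3) (Fin n → ZMod 3) := Submodule.span (ZMod 3) (S' : Set _) with hU
    -- the subgroup of elements whose translation part lies in `U`
    let T : Subgroup (PresentedGroup (pathThreeRelators n)) :=
      { carrier := {g | (phi n g).v ∈ U}
        one_mem' := by simp
        mul_mem' := by
          intro a b ha hb
          simp only [Set.mem_setOf_eq, map_mul, GD.mul_v] at *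
          split
          · exact U.add_mem ha hb
          · exact U.add_mem ha (U.neg_mem hb)
        inv_mem' := by
          intro a ha
          simp only [Set.mem_setOf_eq, map_inv, GD.inv_v] at *
          split
          · exact U.neg_mem ha
          · exact ha }
    have hST : Subgroup.closure (S : Set (PresentedGroup (pathThreeRelators n))) ≤ T := by
      apply Subgroup.closure_le T |>.mpr
      intro g hg
      exact Submodule.subset_span (Finset.mem_coe.mpr (Finset.mem_image_of_mem _ hg))
    rw [hclos] at hST
    -- every standard basis vector lies in `U`, so `U = ⊤`
    have hsingle : ∀ i : Fin n, Pi.single i 1 ∈ U := by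
      intro i
      have h : (phi n (PresentedGroup.of i)).v ∈ U := hST (Subgroup.mem_top _)
      rw [phi_of] at h
      exact h
    have hUtop : U = ⊤ := by
      rw [eq_top_iff]
      have hb := (Pi.basisFun (ZMod 3) (Fin n)).span_eq
      rw [← hb]
      apply Submodule.span_le.mpr
      rintro w ⟨i, rfl⟩
      simpa [Pi.basisFun_apply] using hsingle i
    -- finrank estimate
    have h1 : Module.finrank (ZMod 3) U ≤ S'.card := finrank_span_finset_le_card S'
    have h2 : Module.finrank (ZMod 3) U = n := by
      rw [hUtop]
      rw [finrank_top]
      simp [Module.finrank_pi]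
    have h3 : S'.card ≤ S.card := Finset.card_image_le
    omega

end Main
end

section
/- Let n ≥ 1, let d : {1, …, n−1} → ℕ satisfy d i ≥ 2 for all i, and let M_d be the path Coxeter matrix on {1, …, n} with consecutive labels d. Let (W, cs) be a Coxeter system with Coxeter matrix M_d. Then every subset T of W consisting of reflections of cs that generates W has cardinality at least n; consequently, since the n simple generators are themselves reflections and generate W, the minimal number of reflections needed to generate W is exactly n (W has Coxeter rank n). -/
/-- The path Coxeter matrix on `{1, …, n}` (as `Fin n`, zero-indexed) with
consecutive labels `d`: its diagonal entries are `1`, the entries at the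
adjacent pairs `(i, i+1)` and `(i+1, i)` are `d i`, and all other entries are
`0` (an infinite bond, following Mathlib's convention).  The labels are
required to satisfy `d i ≥ 2`. -/
def pathCoxeterMatrix (n : ℕ) (d : ℕ → ℕ) (hd : ∀ i : ℕ, i < n - 1 → 2 ≤ d i) :
    CoxeterMatrix (Fin n) where
  M := Matrix.of fun i j : Fin n =>
    if i = j then 1
    else if (i : ℕ) + 1 = (j : ℕ) ∨ (j : ℕ) + 1 = (i : ℕ) then d (min (i : ℕ) (j : ℕ))
    else 0
  isSymm := by
    unfold Matrix.IsSymm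
    ext i j
    simp only [Matrix.transpose_apply, Matrix.of_apply]
    rcases eq_or_ne i j with rfl | hij
    · simp
    · simp only [hij, hij.symm, if_false, or_comm, min_comm]
  diagonal i := by simp
  off_diagonal i j hij := by
    simp only [Matrix.of_apply, hij, if_false]
    split
    · next hadj =>
      have hle : min (i : ℕ) (j : ℕ) < n - 1 := by
        have hi := i.isLt
        have hj := j.isLt
        omega
      have := hd _ hle
      omega
    · omega

noncomputable section PathCoxAux

open Real

namespace PathCox

variable (n : ℕ) (d : ℕ → ℕ)

/-- Bilinear form matrix entries for the geometric representation. -/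
def bm (i j : Fin n) : ℝ :=
  if i = j then 2
  else if (i : ℕ) + 1 = (j : ℕ) ∨ (j : ℕ) + 1 = (i : ℕ) then
    -2 * Real.cos (Real.pi / d (min (i : ℕ) (j : ℕ)))
  else 0

/-- The linear functional `v ↦ ∑ j, bm i j * v j`. -/
def g (i : Fin n) : (Fin n → ℝ) →ₗ[ℝ] ℝ := ∑ j, bm n d i j • LinearMap.proj j

lemma g_apply (i : Fin n) (v : Fin n → ℝ) :
    g n d i v = ∑ j, bm n d i j * v j := by
  simp [g, LinearMap.sum_apply]

lemma g_single (i j : Fin n) : g n d i (Pi.single j (1:ℝ)) = bm n d i j := by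
  rw [g_apply, Finset.sum_eq_single j]
  · simp
  · intro k _ hk
    simp [Pi.single_apply, hk.symm]
  · simp

lemma bm_diag (i : Fin n) : bm n d i i = 2 := by simp [bm]

/-- The reflection with root `eᵢ`. -/
def sigma (i : Fin n) : Module.End ℝ (Fin n → ℝ) :=
  LinearMap.id - (g n d i).smulRight (Pi.single i (1:ℝ))

lemma sigma_apply (i : Fin n) (v : Fin n → ℝ) :
    sigma n d i v = v - g n d i v • (Pi.single i (1:ℝ) : Fin n → ℝ) := rfl

lemma sigma_sq (i : Fin n) : sigma n d i * sigma n d i = 1 := by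
  apply LinearMap.ext
  intro v
  simp only [Module.End.mul_apply, sigma_apply, map_sub, map_smul, g_single, bm_diag,
    Module.End.one_apply, smul_eq_mul]
  module


lemma adjacent_rel (i j : Fin n) (hij : (i : ℕ) + 1 = (j : ℕ)) (hd2 : 2 ≤ d (i : ℕ)) :
    (sigma n d i * sigma n d j) ^ (d (i : ℕ)) = 1 := by
  set θ : ℝ := Real.pi / d (i : ℕ) with hθ
  have hdpos : (0 : ℝ) < (d (i : ℕ) : ℝ) := by
    have : (2 : ℝ) ≤ (d (i : ℕ) : ℝ) := by exact_mod_cast hd2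
    linarith
  have hθpos : 0 < θ := div_pos Real.pi_pos hdpos
  have hθlt : θ < Real.pi := by
    rw [hθ]
    apply div_lt_self Real.pi_pos
    exact_mod_cast hd2
  set c : ℝ := Real.cos θ with hc
  set s : ℝ := Real.sin θ with hsdef
  have hs : 0 < s := Real.sin_pos_of_pos_of_lt_pi hθpos hθlt
  have hcs : s ^ 2 + c ^ 2 = 1 := Real.sin_sq_add_cos_sq θ
  have hne : i ≠ j := by
    intro h; rw [h] at hij; omega
  have hminij : min (i : ℕ) (j : ℕ) = (i : ℕ) := by omega
  have hbij : bm n d i j = -2 * c := by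
    rw [bm, if_neg hne, if_pos (Or.inl hij), hminij]
  have hbji : bm n d j i = -2 * c := by
    rw [bm, if_neg hne.symm, if_pos (Or.inr hij), min_comm, hminij]
  set ei : Fin n → ℝ := Pi.single i (1:ℝ) with hei
  set ej : Fin n → ℝ := Pi.single j (1:ℝ) with hej
  set a : Module.End ℝ (Fin n → ℝ) := sigma n d i * sigma n d j with ha
  have hav : ∀ v, a v = v - (g n d i v + 2 * c * g n d j v) • ei - g n d j v • ej := by
    intro v
    rw [ha, Module.End.mul_apply, sigma_apply, sigma_apply, map_sub, map_smul, g_single, hbij]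
    simp only [smul_eq_mul]
    module
  have hgia : ∀ v, g n d i (a v) = -(g n d i v) - 2 * c * g n d j v := by
    intro v
    rw [hav, map_sub, map_sub, map_smul, map_smul, hei, hej, g_single, g_single, hbij, bm_diag]
    simp only [smul_eq_mul]; ring
  have hgja : ∀ v, g n d j (a v) = 2 * c * g n d i v + (4 * c ^ 2 - 1) * g n d j v := by
    intro v
    rw [hav, map_sub, map_sub, map_smul, map_smul, hei, hej, g_single, g_single, hbji, bm_diag]
    simp only [smul_eq_mul]; ring
  have key : ∀ m : ℕ, ∀ v : Fin n → ℝ,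
      (2 * (1 - c ^ 2)) • ((a ^ m) v) = (2 * (1 - c ^ 2)) • v
        + ((Real.cos (2 * m * θ) - 1) * g n d i v
            + (c * (Real.cos (2 * m * θ) - 1) - s * Real.sin (2 * m * θ)) * g n d j v) • ei
        + ((c * (Real.cos (2 * m * θ) - 1) + s * Real.sin (2 * m * θ)) * g n d i v
            + (Real.cos (2 * m * θ) - 1) * g n d j v) • ej := by
    intro m
    induction m with
    | zero =>
      intro v
      simp only [pow_zero, Module.End.one_apply, Nat.cast_zero, mul_zero, zero_mul,
        Real.cos_zero, Real.sin_zero]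
      module
    | succ m ih =>
      intro v
      have hK : Real.cos (2 * (m + 1 : ℕ) * θ)
          = Real.cos (2 * m * θ) * (2 * c ^ 2 - 1) - 2 * c * (s * Real.sin (2 * m * θ)) := by
        have harg : (2 * ((m : ℝ) + 1) * θ) = 2 * m * θ + 2 * θ := by ring
        push_cast
        rw [harg, Real.cos_add, Real.cos_two_mul, Real.sin_two_mul]
        ring
      have hL : s * Real.sin (2 * (m + 1 : ℕ) * θ)
          = (s * Real.sin (2 * m * θ)) * (2 * c ^ 2 - 1)
            + 2 * c * (1 - c ^ 2) * Real.cos (2 * m * θ) := by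
        have harg : (2 * ((m : ℝ) + 1) * θ) = 2 * m * θ + 2 * θ := by ring
        push_cast
        rw [harg, Real.sin_add, Real.cos_two_mul, Real.sin_two_mul]
        linear_combination (2 * c * Real.cos (2 * (m : ℝ) * θ)) * hcs
      have hpow : (a ^ (m + 1)) v = (a ^ m) (a v) := by
        rw [pow_succ, Module.End.mul_apply]
      rw [hpow, ih (a v), hgia v, hgja v, hav v, hK, hL]
      match_scalars <;> ring
  have hfin : ∀ v : Fin n → ℝ, (a ^ (d (i : ℕ))) v = v := by
    intro v
    have h2π : 2 * (d (i : ℕ) : ℝ) * θ = 2 * Real.pi := by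
      rw [hθ]
      field_simp
    have := key (d (i : ℕ)) v
    rw [h2π, Real.cos_two_pi, Real.sin_two_pi] at this
    have hnz : (2 * (1 - c ^ 2) : ℝ) ≠ 0 := by nlinarith
    apply smul_right_injective (Fin n → ℝ) hnz
    simpa using this
  apply LinearMap.ext
  intro v
  simpa using hfin v

lemma path_liftable (hd : ∀ i : ℕ, i < n - 1 → 2 ≤ d i) :
    (pathCoxeterMatrix n d hd).IsLiftable (fun i => sigma n d i) := by
  intro i j
  show (sigma n d i * sigma n d j) ^ (pathCoxeterMatrix n d hd) i j = 1
  have hM : (pathCoxeterMatrix n d hd) i j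
      = (if i = j then 1
          else if (i : ℕ) + 1 = (j : ℕ) ∨ (j : ℕ) + 1 = (i : ℕ)
            then d (min (i : ℕ) (j : ℕ)) else 0) := rfl
  rw [hM]
  rcases eq_or_ne i j with rfl | hne
  · rw [if_pos rfl, pow_one]
    exact sigma_sq n d i
  · rw [if_neg hne]
    by_cases hadj : (i : ℕ) + 1 = (j : ℕ) ∨ (j : ℕ) + 1 = (i : ℕ)
    · rw [if_pos hadj]
      rcases hadj with h | h
      · have hmin : min (i : ℕ) (j : ℕ) = (i : ℕ) := by omega
        rw [hmin]
        exact adjacent_rel n d i j h (hd _ (by have := j.isLt; omega))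
      · have hmin : min (i : ℕ) (j : ℕ) = (j : ℕ) := by omega
        rw [hmin]
        have h1 : (sigma n d j * sigma n d i) ^ d (j : ℕ) = 1 :=
          adjacent_rel n d j i h (hd _ (by have := i.isLt; omega))
        have hsc : SemiconjBy (sigma n d i) (sigma n d j * sigma n d i)
            (sigma n d i * sigma n d j) := (mul_assoc _ _ _).symm
        have h2 := (hsc.pow_right (d (j : ℕ))).eq
        rw [h1, mul_one] at h2
        calc (sigma n d i * sigma n d j) ^ d (j : ℕ)
            = ((sigma n d i * sigma n d j) ^ d (j : ℕ) * sigma n d i) * sigma n d i := by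
              rw [mul_assoc, sigma_sq, mul_one]
          _ = sigma n d i * sigma n d i := by rw [← h2]
          _ = 1 := sigma_sq n d i
    · rw [if_neg hadj, pow_zero]

end PathCox


end PathCoxAux

/-- **Coxeter rank of path Coxeter groups.** Let `n ≥ 1`, let `d` satisfy
`d i ≥ 2`, and let `(W, cs)` be a Coxeter system whose Coxeter matrix is the
path matrix on `{1, …, n}` with consecutive labels `d`.  Then every finite set
of reflections of `cs` generating `W` has cardinality at least `n`, and the
`n` simple generators are reflections generating `W`; hence the minimal number
of reflections needed to generate `W` is exactly `n` (`W` has Coxeter rank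
`n`). -/



theorem coxeterRank_pathCoxeterGroup (n : ℕ) (hn : 1 ≤ n)
    (d : ℕ → ℕ) (hd : ∀ i : ℕ, i < n - 1 → 2 ≤ d i)
    (W : Type*) [Group W] (cs : CoxeterSystem (pathCoxeterMatrix n d hd) W) :
    IsLeast {k : ℕ | ∃ T : Finset W,
      (∀ t ∈ T, cs.IsReflection t) ∧
        Subgroup.closure (T : Set W) = ⊤ ∧ T.card = k} n := by
  classical
  set ρ : W →* Module.End ℝ (Fin n → ℝ) :=
    cs.lift ⟨fun i => PathCox.sigma n d i, PathCox.path_liftable n d hd⟩ with hρdef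
  have hρs : ∀ i : Fin n, ρ (cs.simple i) = PathCox.sigma n d i := fun i =>
    cs.lift_apply_simple _ i
  have hinj : Function.Injective cs.simple := by
    intro i j hsij
    by_contra hne
    have hσ : PathCox.sigma n d i = PathCox.sigma n d j := by
      rw [← hρs i, ← hρs j, hsij]
    have h2 : PathCox.sigma n d i (Pi.single i (1:ℝ))
        = PathCox.sigma n d j (Pi.single i (1:ℝ)) := by rw [hσ]
    rw [PathCox.sigma_apply, PathCox.sigma_apply, PathCox.g_single, PathCox.g_single,
      PathCox.bm_diag] at h2
    have h3 := congrFun h2 i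
    simp only [Pi.sub_apply, Pi.smul_apply, Pi.single_eq_same, smul_eq_mul,
      Pi.single_eq_of_ne hne, mul_zero, sub_zero] at h3
    norm_num at h3
  constructor
  · refine ⟨Finset.image cs.simple Finset.univ, ?_, ?_, ?_⟩
    · intro t ht
      simp only [Finset.mem_image] at ht
      obtain ⟨i, -, rfl⟩ := ht
      exact cs.isReflection_simple i
    · rw [Finset.coe_image, Finset.coe_univ, Set.image_univ]
      exact cs.subgroup_closure_range_simple
    · rw [Finset.card_image_of_injective _ hinj, Finset.card_univ, Fintype.card_fin]
  · rintro k ⟨T, hrefl, hclos, rfl⟩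
    set β : W → (Fin n → ℝ) := fun t =>
      if h : cs.IsReflection t then ρ h.choose (Pi.single h.choose_spec.choose (1:ℝ))
      else 0 with hβ
    set U : Submodule ℝ (Fin n → ℝ) :=
      Submodule.span ℝ ((T.image β : Finset (Fin n → ℝ)) : Set (Fin n → ℝ)) with hU
    have hH : ∀ w : W, ∀ v, ρ w v - v ∈ U := by
      set H : Subgroup W :=
        { carrier := {w | ∀ v, ρ w v - v ∈ U}
          one_mem' := by intro v; simp
          mul_mem' := by
            intro x y hx hy v
            have hxy : ρ (x * y) v - v = (ρ x (ρ y v) - ρ y v) + (ρ y v - v) := by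
              rw [map_mul, Module.End.mul_apply]; abel
            rw [hxy]
            exact U.add_mem (hx _) (hy _)
          inv_mem' := by
            intro x hx v
            have hxv : ρ x (ρ x⁻¹ v) = v := by
              rw [← Module.End.mul_apply, ← map_mul, mul_inv_cancel, map_one,
                Module.End.one_apply]
            have hrw : ρ x⁻¹ v - v = -(ρ x (ρ x⁻¹ v) - ρ x⁻¹ v) := by rw [hxv]; abel
            rw [hrw]
            exact U.neg_mem (hx _) } with hHdef
      have hle : (⊤ : Subgroup W) ≤ H := by
        rw [← hclos, Subgroup.closure_le]
        have hgen : ∀ (w0 : W) (i0 : Fin n) (v : Fin n → ℝ),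
            ρ (w0 * cs.simple i0 * w0⁻¹) v - v
              = (-(PathCox.g n d i0 (ρ w0⁻¹ v))) • ρ w0 (Pi.single i0 (1:ℝ)) := by
          intro w0 i0 v
          have hvv : ρ w0 (ρ w0⁻¹ v) = v := by
            rw [← Module.End.mul_apply, ← map_mul, mul_inv_cancel, map_one, Module.End.one_apply]
          rw [map_mul, map_mul, Module.End.mul_apply, Module.End.mul_apply,
            hρs, PathCox.sigma_apply, map_sub, map_smul, hvv]
          module
        intro t ht
        have h := hrefl t ht
        have hw0 : t = h.choose * cs.simple h.choose_spec.choose * h.choose⁻¹ :=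
          h.choose_spec.choose_spec
        intro v
        have hβt : β t = ρ h.choose (Pi.single h.choose_spec.choose (1:ℝ)) := dif_pos h
        have hρt : ρ t v - v
            = (-(PathCox.g n d h.choose_spec.choose (ρ h.choose⁻¹ v))) • β t := by
          rw [hβt]
          conv_lhs => rw [hw0]
          exact hgen _ _ v
        rw [hρt]
        exact U.smul_mem _ (Submodule.subset_span
          (Finset.mem_coe.mpr (Finset.mem_image_of_mem β ht)))
      intro w
      exact hle (Subgroup.mem_top w)
    have hsingle : ∀ i : Fin n, (Pi.single i (1:ℝ) : Fin n → ℝ) ∈ U := by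
      intro i
      have h1 := hH (cs.simple i) (Pi.single i (1:ℝ))
      rw [hρs] at h1
      have heq : (Pi.single i (1:ℝ) : Fin n → ℝ)
          = (-(1:ℝ)/2) • (PathCox.sigma n d i (Pi.single i (1:ℝ)) - Pi.single i (1:ℝ)) := by
        rw [PathCox.sigma_apply, PathCox.g_single, PathCox.bm_diag]
        module
      rw [heq]
      exact U.smul_mem _ h1
    have hUtop : U = ⊤ := by
      rw [eq_top_iff, ← (Pi.basisFun ℝ (Fin n)).span_eq]
      apply Submodule.span_le.mpr
      rintro x ⟨i, rfl⟩
      rw [Pi.basisFun_apply]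
      exact hsingle i
    calc n = Module.finrank ℝ (Fin n → ℝ) := (Module.finrank_fin_fun ℝ).symm
      _ = Module.finrank ℝ U := by rw [hUtop, finrank_top]
      _ ≤ (T.image β).card := by
          simpa [hU, Set.finrank] using finrank_span_finset_le_card (T.image β)
      _ ≤ T.card := Finset.card_image_le
end

section
/- Let n ≥ 1, let d : {1, …, n−1} → ℕ satisfy d i ≥ 2 for all i, and let M_d be the path Coxeter matrix on {1, …, n} with consecutive labels d. Let (W, cs) be a Coxeter system with Coxeter matrix M_d. Let G be any group, let φ : G → W be a surjective group homomorphism, and let S be a finite subset of G generating G such that φ(s) is a reflection of cs for every s ∈ S. Then S has cardinality at least n. (This is the mechanism by which a quotient onto a Coxeter group of Coxeter rank n, carrying distinguished generators to reflections, bounds from below the number of such generators needed.) -/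
open Real Finset

/-- Powers of the matrix of a product of two reflections in the plane. -/
lemma pathAux_matrix_pow (m : ℕ) (hm : 2 ≤ m) :
    let c := Real.cos (Real.pi / m)
    let A : Matrix (Fin 2) (Fin 2) ℝ := !![4*c^2-1, -(2*c); 2*c, -1]
    A ^ m = 1 ∧ ∑ k ∈ Finset.range m, A ^ k = 0 := by
  intro c A
  have hm0 : (0:ℝ) < m := by positivity
  -- bounds on c
  have hm2 : (2:ℝ) ≤ m := by exact_mod_cast hm
  have hπm_le : Real.pi / m ≤ Real.pi / 2 := by
    rw [div_le_div_iff₀ hm0 two_pos]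
    nlinarith [Real.pi_pos]
  have hπm_pos : 0 < Real.pi / m := by positivity
  have hc0 : 0 ≤ c := Real.cos_nonneg_of_mem_Icc ⟨by nlinarith [Real.pi_pos], hπm_le⟩
  have hc1 : c < 1 := by
    have h := Real.cos_lt_cos_of_nonneg_of_le_pi (le_refl 0)
      (by nlinarith [Real.pi_pos] : Real.pi / m ≤ Real.pi) hπm_pos
    rwa [Real.cos_zero] at h
  have hA2 : A ^ 2 = (4*c^2-2) • A - 1 := by
    ext i j
    fin_cases i <;> fin_cases j <;>
      simp [pow_two, A, Matrix.mul_apply, Fin.sum_univ_two, Matrix.one_apply] <;> ring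
  have hApow : A ^ m = 1 := by
    rcases eq_or_lt_of_le hm with rfl | hm3
    · have hc : c = 0 := by simp [c, Real.cos_pi_div_two]
      have hAneg : A = -1 := by
        ext i j
        fin_cases i <;> fin_cases j <;> simp [A, hc, Matrix.one_apply]
      rw [hAneg, neg_one_sq]
    · -- m ≥ 3
      set θ : ℝ := 2 * Real.pi / m with hθdef
      have hθpos : 0 < θ := by positivity
      have hθlt : θ < Real.pi := by
        rw [hθdef, div_lt_iff₀ hm0]
        have : (3:ℝ) ≤ m := by exact_mod_cast hm3
        nlinarith [Real.pi_pos]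
      have hsθ : 0 < Real.sin θ := Real.sin_pos_of_pos_of_lt_pi hθpos hθlt
      have htrace : 4*c^2 - 2 = 2 * Real.cos θ := by
        have : θ = 2 * (Real.pi / m) := by rw [hθdef]; ring
        rw [this, Real.cos_two_mul]
        ring
      set u : ℕ → ℝ := fun k => Real.sin (k * θ) / Real.sin θ with hu
      have hu0 : u 0 = 0 := by simp [hu]
      have hu1 : u 1 = 1 := by
        simp [hu]
        simp [hsθ.ne']
      have hurec : ∀ k : ℕ, u (k+2) = (4*c^2-2) * u (k+1) - u k := by
        intro k
        have h1 : ((k:ℝ)+2) * θ = ((k:ℝ)+1)*θ + θ := by ring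
        have h2 : (k:ℝ) * θ = ((k:ℝ)+1)*θ - θ := by ring
        have hs1 : Real.sin (((k:ℝ)+2)*θ) = Real.sin (((k:ℝ)+1)*θ) * Real.cos θ
            + Real.cos (((k:ℝ)+1)*θ) * Real.sin θ := by rw [h1, Real.sin_add]
        have hs2 : Real.sin ((k:ℝ)*θ) = Real.sin (((k:ℝ)+1)*θ) * Real.cos θ
            - Real.cos (((k:ℝ)+1)*θ) * Real.sin θ := by rw [h2, Real.sin_sub]
        simp only [hu]
        push_cast
        rw [htrace, hs1, hs2]
        field_simp
        ring
      have hpow : ∀ k : ℕ, A ^ (k+1) = u (k+1) • A - u k • 1 := by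
        intro k
        induction k with
        | zero => rw [hu0, hu1]; simp
        | succ k ih =>
          rw [show k+2 = (k+1)+1 from rfl, pow_succ, ih, hurec k]
          rw [sub_mul, smul_mul_assoc, smul_mul_assoc, one_mul, ← pow_two, hA2]
          rw [smul_sub, smul_smul]
          ext i j
          simp [Matrix.sub_apply, Matrix.smul_apply, smul_eq_mul]
          ring
      have hum : u m = 0 := by
        have : (m:ℝ) * θ = 2 * Real.pi := by
          rw [hθdef]; field_simp
        simp [hu, this, Real.sin_two_pi]
      have hum1 : u (m-1) = -1 := by
        have h1 : ((m:ℝ)-1) * θ = 2*Real.pi - θ := by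
          rw [hθdef]; field_simp
        have : ((m-1 : ℕ) : ℝ) = (m:ℝ) - 1 := by
          have : 1 ≤ m := by omega
          push_cast [this]; ring
        simp only [hu, this, h1]
        rw [Real.sin_sub, Real.sin_two_pi, Real.cos_two_pi]
        field_simp
        ring
      have hm1 : m - 1 + 1 = m := by omega
      have := hpow (m-1)
      rw [hm1] at this
      rw [this, hum, hum1]
      simp
  refine ⟨hApow, ?_⟩
  have hgeom : (∑ k ∈ Finset.range m, A ^ k) * (A - 1) = 0 := by
    rw [geom_sum_mul, hApow, sub_self]
  have hdet : IsUnit (A - 1).det := by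
    have : (A - 1).det = 4 - 4 * c^2 := by
      have : A - 1 = !![4*c^2-2, -(2*c); 2*c, -2] := by
        ext i j
        fin_cases i <;> fin_cases j <;> simp [A, Matrix.one_apply] <;> ring
      rw [this, Matrix.det_fin_two_of]
      ring
    rw [this]
    have : (0:ℝ) < 4 - 4*c^2 := by nlinarith
    exact (isUnit_iff_ne_zero).mpr (by linarith)
  calc ∑ k ∈ Finset.range m, A ^ k
      = (∑ k ∈ Finset.range m, A ^ k) * ((A-1) * (A-1)⁻¹) := by
        rw [Matrix.mul_nonsing_inv _ hdet, mul_one]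
    _ = ((∑ k ∈ Finset.range m, A ^ k) * (A-1)) * (A-1)⁻¹ := by rw [mul_assoc]
    _ = 0 := by rw [hgeom, zero_mul]


open Real Finset

section PathRefl

variable {n : ℕ} (Bm : Fin n → Fin n → ℝ)

/-- The linear functional `v ↦ ∑ j, Bm i j * v j`. -/
noncomputable def pathBform (i : Fin n) : (Fin n → ℝ) →ₗ[ℝ] ℝ :=
  ∑ j, Bm i j • LinearMap.proj j

lemma pathBform_apply (i : Fin n) (v : Fin n → ℝ) :
    pathBform Bm i v = ∑ j, Bm i j * v j := by
  simp [pathBform, LinearMap.sum_apply, smul_eq_mul]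

lemma pathBform_single (i j : Fin n) :
    pathBform Bm i (Pi.single j 1) = Bm i j := by
  rw [pathBform_apply]
  rw [Finset.sum_eq_single j]
  · simp
  · intro k _ hk
    simp [Pi.single_apply, hk]
  · simp

/-- The reflection `v ↦ v - 2 B(αᵢ, v) αᵢ` in the representation attached to `Bm`. -/
noncomputable def pathRefl (i : Fin n) : Module.End ℝ (Fin n → ℝ) :=
  LinearMap.id - (pathBform Bm i).smulRight ((2:ℝ) • (Pi.single i 1 : Fin n → ℝ))

lemma pathRefl_apply (i : Fin n) (v : Fin n → ℝ) :
    pathRefl Bm i v = v - (2 * pathBform Bm i v) • (Pi.single i 1 : Fin n → ℝ) := by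
  simp only [pathRefl, LinearMap.sub_apply, LinearMap.id_apply, LinearMap.smulRight_apply]
  rw [smul_smul, mul_comm]

lemma pathRefl_sq (i : Fin n) (hii : Bm i i = 1) :
    pathRefl Bm i * pathRefl Bm i = 1 := by
  apply LinearMap.ext
  intro v
  simp only [Module.End.mul_apply, pathRefl_apply, map_sub, map_smul, pathBform_single,
    hii, smul_eq_mul, Module.End.one_apply]
  module

/-- A helper: linear combination of two fixed vectors. -/
noncomputable def pathVec2 (a b : Fin n → ℝ) (z : Fin 2 → ℝ) : Fin n → ℝ :=
  z 0 • a + z 1 • b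

lemma pathVec2_add (a b : Fin n → ℝ) (z w : Fin 2 → ℝ) :
    pathVec2 a b (z + w) = pathVec2 a b z + pathVec2 a b w := by
  simp [pathVec2, add_smul]
  module

lemma pathVec2_zero (a b : Fin n → ℝ) : pathVec2 a b 0 = 0 := by
  simp [pathVec2]

lemma pathRefl_prod_pow (i j : Fin n) (hij : i ≠ j) (m : ℕ) (hm : 2 ≤ m)
    (hii : Bm i i = 1) (hjj : Bm j j = 1)
    (hBij : Bm i j = -Real.cos (Real.pi / m)) (hBji : Bm j i = -Real.cos (Real.pi / m)) :
    (pathRefl Bm i * pathRefl Bm j) ^ m = 1 := by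
  set c : ℝ := Real.cos (Real.pi / m) with hc
  set A : Matrix (Fin 2) (Fin 2) ℝ := !![4*c^2-1, -(2*c); 2*c, -1] with hA
  obtain ⟨hApow, hAsum⟩ := pathAux_matrix_pow m hm
  set a : Fin n → ℝ := Pi.single i 1 with ha
  set b : Fin n → ℝ := Pi.single j 1 with hb
  set g := pathRefl Bm i * pathRefl Bm j with hg
  -- action of g on a and b
  have hga : g a = pathVec2 a b ![4*c^2-1, 2*c] := by
    simp only [hg, Module.End.mul_apply, pathRefl_apply, map_sub, map_smul, pathBform_single,
      hii, hjj, hBij, hBji, smul_eq_mul, pathVec2, Matrix.cons_val_zero, Matrix.cons_val_one,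
      Matrix.head_cons, ha, hb]
    match_scalars <;> ring
  have hgb : g b = pathVec2 a b ![-(2*c), -1] := by
    simp only [hg, Module.End.mul_apply, pathRefl_apply, map_sub, map_smul, pathBform_single,
      hii, hjj, hBij, hBji, smul_eq_mul, pathVec2, Matrix.cons_val_zero, Matrix.cons_val_one,
      Matrix.head_cons, ha, hb]
    match_scalars <;> ring
  -- g acts on the plane span{a, b} via the matrix A
  have hplane : ∀ z : Fin 2 → ℝ, g (pathVec2 a b z) = pathVec2 a b (A.mulVec z) := by
    intro z
    have : pathVec2 a b z = z 0 • a + z 1 • b := rfl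
    rw [this, map_add, map_smul, map_smul, hga, hgb]
    simp only [pathVec2, Matrix.mulVec, dotProduct, Fin.sum_univ_two, hA,
      Matrix.cons_val', Matrix.cons_val_zero, Matrix.cons_val_one, Matrix.head_cons,
      Matrix.empty_val', Matrix.cons_val_fin_one, Matrix.head_fin_const]
    match_scalars <;>
      (simp only [Matrix.cons_val', Matrix.cons_val_zero, Matrix.cons_val_one, Matrix.head_cons,
        Matrix.empty_val', Matrix.cons_val_fin_one, Matrix.head_fin_const, Matrix.of_apply]
       ring)
  -- g moves every vector by an element of the plane
  have hmove : ∀ v : Fin n → ℝ, g v = v + pathVec2 a b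
      ![-(2 * pathBform Bm i (pathRefl Bm j v)), -(2 * pathBform Bm j v)] := by
    intro v
    rw [hg, Module.End.mul_apply, pathRefl_apply Bm i, pathRefl_apply Bm j]
    simp only [pathVec2, Matrix.cons_val_zero, Matrix.cons_val_one, Matrix.head_cons, ← ha, ← hb]
    module
  -- iterate
  have hiter : ∀ (k : ℕ) (v : Fin n → ℝ), (g ^ k) v = v + pathVec2 a b
      ((∑ l ∈ Finset.range k, A ^ l).mulVec
        ![-(2 * pathBform Bm i (pathRefl Bm j v)), -(2 * pathBform Bm j v)]) := by
    intro k
    induction k with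
    | zero =>
      intro v
      simp [pathVec2_zero]
    | succ k ih =>
      intro v
      rw [pow_succ', Module.End.mul_apply, ih v, map_add, hplane, hmove v, geom_sum_succ,
        Matrix.add_mulVec, Matrix.one_mulVec, ← Matrix.mulVec_mulVec, pathVec2_add]
      abel
  apply LinearMap.ext
  intro v
  rw [hiter m v, hAsum, Matrix.zero_mulVec, pathVec2_zero, add_zero, Module.End.one_apply]

end PathRefl

/-- The bilinear-form matrix used to build the reflection representation of the
path Coxeter group. -/
noncomputable def pathB (n : ℕ) (d : ℕ → ℕ) : Fin n → Fin n → ℝ := fun i j =>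
  if i = j then 1
  else if (i : ℕ) + 1 = (j : ℕ) ∨ (j : ℕ) + 1 = (i : ℕ) then
    -Real.cos (Real.pi / d (min (i : ℕ) (j : ℕ)))
  else 0

lemma path_liftable (n : ℕ) (d : ℕ → ℕ) (hd : ∀ i : ℕ, i < n - 1 → 2 ≤ d i) :
    (pathCoxeterMatrix n d hd).IsLiftable (fun i => pathRefl (pathB n d) i) := by
  intro i j
  have hMval : (pathCoxeterMatrix n d hd) i j =
      (if i = j then 1
       else if (i : ℕ) + 1 = (j : ℕ) ∨ (j : ℕ) + 1 = (i : ℕ) then d (min (i : ℕ) (j : ℕ))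
       else 0) := rfl
  by_cases hij : i = j
  · subst hij
    rw [hMval]
    simp only [if_pos rfl, pow_one]
    exact pathRefl_sq _ i (by simp [pathB])
  · by_cases hadj : (i : ℕ) + 1 = (j : ℕ) ∨ (j : ℕ) + 1 = (i : ℕ)
    · rw [hMval, if_neg hij, if_pos hadj]
      have hlt : min (i : ℕ) (j : ℕ) < n - 1 := by
        have hi := i.isLt
        have hj := j.isLt
        omega
      have hm : 2 ≤ d (min (i : ℕ) (j : ℕ)) := hd _ hlt
      apply pathRefl_prod_pow (pathB n d) i j hij _ hm
      · simp [pathB]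
      · simp [pathB]
      · simp only [pathB]
        rw [if_neg hij, if_pos hadj]
      · have hji : ¬ (j = i) := fun h => hij h.symm
        simp only [pathB]
        rw [if_neg hji, if_pos (Or.symm hadj), min_comm]
    · rw [hMval, if_neg hij, if_neg hadj, pow_zero]

/-- **Quotients onto path Coxeter groups bound the number of meridional
generators.** Let `n ≥ 1`, let `d` satisfy `d i ≥ 2`, and let `(W, cs)` be a
Coxeter system whose Coxeter matrix is the path matrix on `{1, …, n}` with
consecutive labels `d`.  If `G` is any group, `φ : G → W` is a surjective
homomorphism, and `S` is a finite generating set of `G` each of whose elements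
is carried by `φ` to a reflection of `cs`, then `S` has at least `n`
elements. -/
theorem card_generators_ge_of_surjective_onto_pathCoxeterGroup
    (n : ℕ) (hn : 1 ≤ n)
    (d : ℕ → ℕ) (hd : ∀ i : ℕ, i < n - 1 → 2 ≤ d i)
    (W : Type*) [Group W] (cs : CoxeterSystem (pathCoxeterMatrix n d hd) W)
    (G : Type*) [Group G] (φ : G →* W) (hφ : Function.Surjective φ)
    (S : Finset G) (hgen : Subgroup.closure (S : Set G) = ⊤)
    (hrefl : ∀ s ∈ S, cs.IsReflection (φ s)) :
    n ≤ S.card := by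
  classical
  set Bm := pathB n d with hBm
  set σ : Fin n → Module.End ℝ (Fin n → ℝ) := fun i => pathRefl Bm i with hσ
  set ρ : W →* Module.End ℝ (Fin n → ℝ) :=
    cs.lift ⟨σ, path_liftable n d hd⟩ with hρ
  have hρs : ∀ i : Fin n, ρ (cs.simple i) = σ i := fun i =>
    cs.lift_apply_simple (path_liftable n d hd) i
  -- every reflection moves vectors along a single line
  have hreflmove : ∀ t : W, cs.IsReflection t →
      ∃ u : Fin n → ℝ, ∀ v : Fin n → ℝ, ρ t v - v ∈ Submodule.span ℝ {u} := by
    rintro t ⟨w, i, rfl⟩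
    refine ⟨ρ w (Pi.single i 1), fun v => ?_⟩
    have hinv : ρ w (ρ w⁻¹ v) = v := by
      rw [← Module.End.mul_apply, ← map_mul, mul_inv_cancel, map_one, Module.End.one_apply]
    rw [map_mul, map_mul, Module.End.mul_apply, Module.End.mul_apply, hρs i, hσ]
    rw [pathRefl_apply, map_sub, map_smul, hinv]
    have heq : v - (2 * pathBform Bm i ((ρ w⁻¹) v)) • ((ρ w) (Pi.single i 1)) - v
        = (-(2 * pathBform Bm i ((ρ w⁻¹) v))) • ((ρ w) (Pi.single i 1)) := by module
    rw [heq]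
    exact Submodule.smul_mem _ _ (Submodule.mem_span_singleton_self _)
  -- choose a direction for each generator
  have hchoice : ∀ s : {x // x ∈ S}, ∃ u : Fin n → ℝ,
      ∀ v : Fin n → ℝ, ρ (φ s) v - v ∈ Submodule.span ℝ {u} :=
    fun s => hreflmove (φ s) (hrefl s s.2)
  choose u hu using hchoice
  set U : Submodule ℝ (Fin n → ℝ) := Submodule.span ℝ (Set.range u) with hU
  -- all elements of G move vectors within U
  have hmemS : ∀ (s : G) (hs : s ∈ S) (v : Fin n → ℝ), ρ (φ s) v - v ∈ U := by
    intro s hs v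
    have h1 := hu ⟨s, hs⟩ v
    have h2 : Submodule.span ℝ {u ⟨s, hs⟩} ≤ U :=
      Submodule.span_mono (Set.singleton_subset_iff.mpr ⟨⟨s, hs⟩, rfl⟩)
    exact h2 h1
  have hmemG : ∀ (g : G) (v : Fin n → ℝ), ρ (φ g) v - v ∈ U := by
    intro g
    have hg : g ∈ Subgroup.closure (S : Set G) := by rw [hgen]; exact Subgroup.mem_top g
    induction hg using Subgroup.closure_induction with
    | mem s hs => exact hmemS s hs
    | one => intro v; simp
    | mul x y hx hy ihx ihy =>
      intro v
      have : ρ (φ (x * y)) v - v = (ρ (φ x) (ρ (φ y) v) - ρ (φ y) v) + (ρ (φ y) v - v) := by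
        rw [map_mul, map_mul, Module.End.mul_apply]
        abel
      rw [this]
      exact U.add_mem (ihx _) (ihy _)
    | inv x hx ihx =>
      intro v
      have hxx : ρ (φ x) (ρ (φ x⁻¹) v) = v := by
        rw [← Module.End.mul_apply, ← map_mul, ← map_mul, mul_inv_cancel, map_one, map_one,
          Module.End.one_apply]
      have : ρ (φ x⁻¹) v - v = -(ρ (φ x) (ρ (φ x⁻¹) v) - ρ (φ x⁻¹) v) := by
        rw [hxx]; abel
      rw [this]
      exact U.neg_mem (ihx _)
  have hmemW : ∀ (w : W) (v : Fin n → ℝ), ρ w v - v ∈ U := by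
    intro w v
    obtain ⟨g, rfl⟩ := hφ w
    exact hmemG g v
  -- the standard basis vectors lie in U
  have hbasis : ∀ i : Fin n, (Pi.single i 1 : Fin n → ℝ) ∈ U := by
    intro i
    have h := hmemW (cs.simple i) (Pi.single i 1)
    rw [hρs i, hσ, pathRefl_apply, pathBform_single] at h
    have hBii : Bm i i = 1 := by simp [hBm, pathB]
    rw [hBii] at h
    have h2 : (Pi.single i 1 : Fin n → ℝ) =
        (-(1:ℝ)/2) • ((Pi.single i 1 : Fin n → ℝ) - ((2:ℝ) * 1) • (Pi.single i 1 : Fin n → ℝ)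
          - Pi.single i 1) := by
      module
    rw [h2]
    exact U.smul_mem _ h
  -- hence U is everything
  have hUtop : U = ⊤ := by
    rw [eq_top_iff, ← (Pi.basisFun ℝ (Fin n)).span_eq, Submodule.span_le]
    rintro x ⟨i, rfl⟩
    simpa [Pi.basisFun_apply] using hbasis i
  -- rank count
  have hrank : Module.finrank ℝ U = n := by
    rw [hUtop, finrank_top, Module.finrank_pi, Fintype.card_fin]
  have hspan : Set.range u = ((S.attach.image u : Finset (Fin n → ℝ)) : Set (Fin n → ℝ)) := by
    ext x
    constructor
    · rintro ⟨s, rfl⟩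
      exact Finset.mem_coe.mpr (Finset.mem_image.mpr ⟨s, S.mem_attach s, rfl⟩)
    · intro hx
      obtain ⟨s, -, rfl⟩ := Finset.mem_image.mp (Finset.mem_coe.mp hx)
      exact ⟨s, rfl⟩
  have hle : Module.finrank ℝ U ≤ (S.attach.image u).card := by
    rw [hU, hspan]
    exact finrank_span_finset_le_card _
  calc n = Module.finrank ℝ U := hrank.symm
    _ ≤ (S.attach.image u).card := hle
    _ ≤ S.attach.card := Finset.card_image_le
    _ = S.card := Finset.card_attach
end
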